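/- Let M be a compact smooth submanifold of ℝ³. Then the reach of M is strictly positive, i.e., there exists r > 0 such that every point x ∈ ℝ³ with dist(x, M) ≤ r has a unique nearest point on M. -/

import Mathlib

/-!
Near `f p`, the image of `f` is parametrised by the `C²` map `F = f ∘ φ⁻¹` (`φ` a chart at `p`),
whose differential is injective. Locally `‖u - v‖ ≤ K ‖F u - F v‖` (injective differential) and
`‖F u - F v - DF(v) (u - v)‖ ≤ L ‖u - v‖²` (Lipschitz differential). If `F u` and `F v` are both
nearest points of `x` at distance `D`, then `x - F v` is normal to the image of `DF(v)`, and
expanding `‖x - F u‖² = ‖x - F v‖²` gives `‖F u - F v‖² ≤ 2 D L K² ‖F u - F v‖²`, so `F u = F v`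
as soon as `2 D L K² < 1`. Compactness of the image turns these local radii into a uniform one.
-/

open Metric Set Filter Topology
open scoped NNReal RealInnerProductSpace Manifold

section NormedSpace

variable {E F : Type*} [NormedAddCommGroup E] [NormedSpace ℝ E]
  [NormedAddCommGroup F] [NormedSpace ℝ F]

theorem Convex.norm_image_sub_sub_le_of_lipschitzOnWith {f : E → F} {f' : E → E →L[ℝ] F}
    {s : Set E} {L : ℝ≥0} (hs : Convex ℝ s) (hf : ∀ z ∈ s, HasFDerivWithinAt f (f' z) s z)
    (hL : LipschitzOnWith L f' s) {u v : E} (hu : u ∈ s) (hv : v ∈ s) :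
    ‖f u - f v - f' v (u - v)‖ ≤ L * ‖u - v‖ ^ 2 := by
  have hseg : segment ℝ v u ⊆ s := hs.segment_subset hv hu
  have hbound : ∀ z ∈ segment ℝ v u, ‖f' z - f' v‖ ≤ L * ‖u - v‖ := fun z hz => by
    have hzv : dist z v ≤ dist u v := by
      rw [dist_comm z, dist_comm u]
      linarith [dist_add_dist_of_mem_segment hz, dist_nonneg (x := z) (y := u)]
    simpa only [dist_eq_norm] using
      (hL.dist_le_mul z (hseg hz) v hv).trans (by rw [← dist_eq_norm]; gcongr)
  calc ‖f u - f v - f' v (u - v)‖ ≤ L * ‖u - v‖ * ‖u - v‖ :=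
        (convex_segment v u).norm_image_sub_le_of_norm_hasFDerivWithin_le'
          (fun z hz => (hf z (hseg hz)).mono hseg) hbound
          (left_mem_segment ℝ v u) (right_mem_segment ℝ v u)
    _ = L * ‖u - v‖ ^ 2 := by ring

theorem ContDiffAt.exists_nhds_norm_image_sub_sub_fderiv_le {f : E → F} {u₀ : E}
    (hf : ContDiffAt ℝ 2 f u₀) :
    ∃ L : ℝ≥0, ∃ s ∈ 𝓝 u₀, ∀ u ∈ s, ∀ v ∈ s,
      ‖f u - f v - fderiv ℝ f v (u - v)‖ ≤ L * ‖u - v‖ ^ 2 := by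
  obtain ⟨L, t, ht, hL⟩ := (hf.fderiv_right (m := 1) le_rfl).exists_lipschitzOnWith
  have hdiff : ∀ᶠ z in 𝓝 u₀, DifferentiableAt ℝ f z :=
    (hf.eventually (by simp)).mono fun z hz => hz.differentiableAt (by simp)
  obtain ⟨ρ, hρ, hball⟩ := nhds_basis_closedBall.mem_iff.mp (inter_mem ht hdiff)
  refine ⟨L, closedBall u₀ ρ, closedBall_mem_nhds u₀ hρ, fun u hu v hv => ?_⟩
  exact (convex_closedBall u₀ ρ).norm_image_sub_sub_le_of_lipschitzOnWith
    (fun z hz => (hball hz).2.hasFDerivAt.hasFDerivWithinAt)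
    (hL.mono fun z hz => (hball hz).1) hu hv

theorem HasStrictFDerivAt.exists_nhds_norm_sub_le_mul_norm_image_sub [FiniteDimensional ℝ E]
    {f : E → F} {A : E →L[ℝ] F} {u₀ : E} (hf : HasStrictFDerivAt f A u₀)
    (hA : Function.Injective A) :
    ∃ K : ℝ≥0, ∃ s ∈ 𝓝 u₀, ∀ u ∈ s, ∀ v ∈ s, ‖u - v‖ ≤ K * ‖f u - f v‖ := by
  obtain ⟨K, hK, hAK⟩ := A.toLinearMap.exists_antilipschitzWith (LinearMap.ker_eq_bot.mpr hA)
  obtain ⟨s, hs, hfs⟩ := hf.approximates_deriv_on_nhds (c := (2 * K)⁻¹) (Or.inr (by positivity))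
  have hc : (2 * K)⁻¹ < K⁻¹ :=
    (inv_lt_inv₀ (by positivity) hK).mpr (by linarith [lt_two_mul_self hK])
  have h := (hAK.domRestrict s).add_lipschitzWith hfs.lipschitz_sub hc
  refine ⟨(K⁻¹ - (2 * K)⁻¹)⁻¹, s, hs, fun u hu v hv => ?_⟩
  simpa [Subtype.dist_eq, dist_eq_norm] using h.le_mul_dist ⟨u, hu⟩ ⟨v, hv⟩

end NormedSpace

section InnerProductSpace

variable {E H : Type*} [NormedAddCommGroup E] [NormedSpace ℝ E]
  [NormedAddCommGroup H] [InnerProductSpace ℝ H]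

theorem IsLocalMin.inner_sub_fderiv_eq_zero {F : E → H} {F' : E →L[ℝ] H} {x : H} {v : E}
    (hmin : IsLocalMin (fun z => ‖x - F z‖) v) (hF : HasFDerivAt F F' v) (w : E) :
    ⟪x - F v, F' w⟫ = 0 := by
  have hsq : IsLocalMin (fun z => ‖x - F z‖ ^ 2) v :=
    hmin.mono fun z hz => pow_le_pow_left₀ (norm_nonneg _) hz 2
  have h0 := DFunLike.congr_fun
    (hsq.hasFDerivAt_eq_zero ((hasFDerivAt_const x v).sub hF).norm_sq) w
  simp only [FunLike.coe_smul, ContinuousLinearMap.coe_comp, Pi.smul_apply,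
    Function.comp_apply, innerSL_apply_apply] at h0
  simpa using h0

theorem norm_sub_sq_le_of_norm_sub_eq {x a b w : H} (hab : ‖x - a‖ = ‖x - b‖)
    (hw : ⟪x - a, w⟫ = 0) : ‖b - a‖ ^ 2 ≤ 2 * ‖x - a‖ * ‖b - a - w‖ := by
  have hsq : ‖(x - a) - (b - a)‖ ^ 2 = ‖x - a‖ ^ 2 := by
    rw [sub_sub_sub_cancel_right, hab]
  rw [norm_sub_sq_real] at hsq
  calc ‖b - a‖ ^ 2 = 2 * ⟪x - a, b - a - w⟫ := by rw [inner_sub_right, hw]; linarith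
    _ ≤ 2 * (‖x - a‖ * ‖b - a - w‖) := by gcongr; exact real_inner_le_norm _ _
    _ = 2 * ‖x - a‖ * ‖b - a - w‖ := by ring

theorem ContDiffAt.exists_nhds_eq_of_isLocalMin_norm_sub [FiniteDimensional ℝ E]
    {F : E → H} {u₀ : E} (hF : ContDiffAt ℝ 2 F u₀)
    (hinj : Function.Injective (fderiv ℝ F u₀)) :
    ∃ s ∈ 𝓝 u₀, ∃ δ > (0 : ℝ), ∀ x : H, ∀ u ∈ s, ∀ v ∈ s,
      IsLocalMin (fun z => ‖x - F z‖) v → ‖x - F u‖ = ‖x - F v‖ → ‖x - F v‖ < δ →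
        F u = F v := by
  obtain ⟨K, s₁, hs₁, hK⟩ :=
    (hF.hasStrictFDerivAt (by norm_num)).exists_nhds_norm_sub_le_mul_norm_image_sub hinj
  obtain ⟨L, s₂, hs₂, hL⟩ := hF.exists_nhds_norm_image_sub_sub_fderiv_le
  have hdiff : ∀ᶠ z in 𝓝 u₀, DifferentiableAt ℝ F z :=
    (hF.eventually (by simp)).mono fun z hz => hz.differentiableAt (by simp)
  refine ⟨s₁ ∩ s₂ ∩ {z | DifferentiableAt ℝ F z}, inter_mem (inter_mem hs₁ hs₂) hdiff,
    1 / (2 * (L * K ^ 2 + 1)), by positivity, ?_⟩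
  rintro x u ⟨⟨hu₁, hu₂⟩, -⟩ v ⟨⟨hv₁, hv₂⟩, hv⟩ hmin hdist hδ
  set D := ‖x - F v‖
  set t := ‖F u - F v‖
  have horth := hmin.inner_sub_fderiv_eq_zero hv.hasFDerivAt (u - v)
  have hsmall : 2 * D * (L * K ^ 2) < 1 := by
    rw [lt_div_iff₀ (by positivity)] at hδ
    nlinarith [norm_nonneg (x - F v), (L * K ^ 2 : ℝ≥0).coe_nonneg]
  have hquad : t ^ 2 ≤ 2 * D * (L * K ^ 2) * t ^ 2 :=
    calc t ^ 2 ≤ 2 * D * ‖F u - F v - fderiv ℝ F v (u - v)‖ :=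
          norm_sub_sq_le_of_norm_sub_eq hdist.symm horth
      _ ≤ 2 * D * (L * ‖u - v‖ ^ 2) := by gcongr; exact hL u hu₂ v hv₂
      _ ≤ 2 * D * (L * (K * t) ^ 2) := by gcongr; exact hK u hu₁ v hv₁
      _ = 2 * D * (L * K ^ 2) * t ^ 2 := by ring
  have ht : t ^ 2 = 0 :=
    le_antisymm (le_of_mul_le_mul_left (a := 1 - 2 * D * (L * K ^ 2)) (by linarith)
      (by linarith)) (sq_nonneg t)
  simpa [t, sub_eq_zero] using ht

end InnerProductSpace

section Chart

variable {𝕜 E E' M : Type*} [NontriviallyNormedField 𝕜] [NormedAddCommGroup E] [NormedSpace 𝕜 E]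
  [NormedAddCommGroup E'] [NormedSpace 𝕜 E'] [TopologicalSpace M] [ChartedSpace E M]
  {f : M → E'} {p : M}

theorem ContMDiffAt.contDiffAt_comp_extChartAt_symm {n : WithTop ℕ∞}
    (hf : ContMDiffAt 𝓘(𝕜, E) 𝓘(𝕜, E') n f p) :
    ContDiffAt 𝕜 n (f ∘ (extChartAt 𝓘(𝕜, E) p).symm) (extChartAt 𝓘(𝕜, E) p p) := by
  simpa [contDiffWithinAt_univ, chartAt_self_eq] using (contMDiffAt_iff.mp hf).2

theorem MDifferentiableAt.mfderiv_eq_fderiv_comp_extChartAt_symm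
    (hf : MDifferentiableAt 𝓘(𝕜, E) 𝓘(𝕜, E') f p) :
    mfderiv 𝓘(𝕜, E) 𝓘(𝕜, E') f p =
      fderiv 𝕜 (f ∘ (extChartAt 𝓘(𝕜, E) p).symm) (extChartAt 𝓘(𝕜, E) p p) := by
  rw [hf.mfderiv, modelWithCornersSelf_coe, range_id, fderivWithin_univ]
  rfl

end Chart

section NearestPoints

variable {X : Type*} [PseudoMetricSpace X]

def nearestPoints (S : Set X) (x : X) : Set X :=
  {y | y ∈ S ∧ dist x y = infDist x S}

theorem IsCompact.exists_pos_forall_subsingleton_nearestPoints {S : Set X} (hS : IsCompact S)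
    (hloc : ∀ q ∈ S, ∃ ε > (0 : ℝ), ∀ x, infDist x S < ε →
      ∀ a ∈ nearestPoints S x, dist a q < ε → ∀ b ∈ nearestPoints S x, b = a) :
    ∃ r > (0 : ℝ), ∀ x, infDist x S ≤ r → (nearestPoints S x).Subsingleton := by
  have hev : ∀ᶠ r in 𝓝 (0 : ℝ), ∀ a ∈ S, ∀ x, infDist x S ≤ r →
      a ∈ nearestPoints S x → ∀ b ∈ nearestPoints S x, b = a := by
    refine hS.eventually_forall_of_forall_eventually fun q hq => ?_
    obtain ⟨ε, hε, h⟩ := hloc q hq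
    filter_upwards [prod_mem_nhds (Iio_mem_nhds hε) (ball_mem_nhds q hε)]
      with ⟨r, a⟩ ⟨hr, ha⟩ x hx haN
    exact h x (hx.trans_lt hr) a haN ha
  obtain ⟨r, hr, hrpos⟩ := ((hev.filter_mono nhdsWithin_le_nhds).and self_mem_nhdsWithin).exists
    (f := 𝓝[>] (0 : ℝ))
  exact ⟨r, hrpos, fun x hx a ha b hb => (hr a ha.1 x hx ha b hb).symm⟩

end NearestPoints

theorem ContMDiffAt.exists_pos_forall_nearestPoints_range_eq {E H M : Type*}
    [NormedAddCommGroup E] [NormedSpace ℝ E] [FiniteDimensional ℝ E]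
    [NormedAddCommGroup H] [InnerProductSpace ℝ H] [TopologicalSpace M] [ChartedSpace E M]
    {f : M → H} {p : M} (hf : ContMDiffAt 𝓘(ℝ, E) 𝓘(ℝ, H) 2 f p)
    (hind : IsInducing f) (himm : Function.Injective (mfderiv 𝓘(ℝ, E) 𝓘(ℝ, H) f p)) :
    ∃ ε > (0 : ℝ), ∀ x, infDist x (range f) < ε →
      ∀ a ∈ nearestPoints (range f) x, dist a (f p) < ε →
        ∀ b ∈ nearestPoints (range f) x, b = a := by
  set e := extChartAt 𝓘(ℝ, E) p
  have hFe : ∀ m ∈ e.source, (f ∘ e.symm) (e m) = f m := fun m hm =>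
    congrArg f (e.left_inv hm)
  obtain ⟨s, hs, δ, hδ, huniq⟩ :=
    hf.contDiffAt_comp_extChartAt_symm.exists_nhds_eq_of_isLocalMin_norm_sub
      (by rwa [← (hf.mdifferentiableAt (by norm_num)).mfderiv_eq_fderiv_comp_extChartAt_symm])
  have hN : e.source ∩ e ⁻¹' s ∈ 𝓝 p :=
    inter_mem (extChartAt_source_mem_nhds p) ((continuousAt_extChartAt p).preimage_mem_nhds hs)
  obtain ⟨ε, hε, hball⟩ := mem_nhdsWithin_iff.mp (hind.map_nhds_eq p ▸ image_mem_map hN)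
  refine ⟨min (ε / 3) δ, by positivity, fun x hx a ha haq b hb => ?_⟩
  have haq' : dist a (f p) < ε := haq.trans_le ((min_le_left _ _).trans (by linarith))
  have hbq : dist b (f p) < ε := by
    have := dist_triangle4 b x a (f p)
    rw [dist_comm b x, hb.2, ha.2] at this
    linarith [min_le_left (ε / 3) δ]
  obtain ⟨m, ⟨hm, hms⟩, rfl⟩ := hball ⟨haq', ha.1⟩
  obtain ⟨m', ⟨hm', hms'⟩, rfl⟩ := hball ⟨hbq, hb.1⟩
  have hmin : IsLocalMin (fun z => ‖x - (f ∘ e.symm) z‖) (e m) := by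
    filter_upwards [(isOpen_extChartAt_target p).mem_nhds (e.map_source hm)] with z hz
    rw [hFe m hm, ← dist_eq_norm, ← dist_eq_norm, ha.2]
    exact infDist_le_dist_of_mem (mem_range_self _)
  have := huniq x (e m') hms' (e m) hms hmin
    (by rw [hFe m' hm', hFe m hm, ← dist_eq_norm, ← dist_eq_norm, ha.2, hb.2])
    (by rw [hFe m hm, ← dist_eq_norm, ha.2]; exact hx.trans_le (min_le_right _ _))
  rwa [hFe m' hm', hFe m hm] at this

theorem positive_reach_of_compact_smooth_submanifold_general
    {d : ℕ} {M : Type*} [TopologicalSpace M] [CompactSpace M] [Nonempty M]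
    [ChartedSpace (EuclideanSpace ℝ (Fin d)) M]
    (f : M → EuclideanSpace ℝ (Fin 3))
    (hf : ContMDiff (modelWithCornersSelf ℝ (EuclideanSpace ℝ (Fin d)))
      (modelWithCornersSelf ℝ (EuclideanSpace ℝ (Fin 3))) (⊤ : ℕ∞) f)
    (hemb : Topology.IsEmbedding f)
    (himm : ∀ m : M, Function.Injective
      (mfderiv (modelWithCornersSelf ℝ (EuclideanSpace ℝ (Fin d)))
        (modelWithCornersSelf ℝ (EuclideanSpace ℝ (Fin 3))) f m)) :
    ∃ r > (0 : ℝ), ∀ x : EuclideanSpace ℝ (Fin 3),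
      infDist x (Set.range f) ≤ r →
        ∃! y, y ∈ Set.range f ∧ dist x y = infDist x (Set.range f) := by
  have hS : IsCompact (range f) := isCompact_range hf.continuous
  obtain ⟨r, hr, hsub⟩ := hS.exists_pos_forall_subsingleton_nearestPoints <| by
    rintro - ⟨p, rfl⟩
    exact ((hf p).of_le (WithTop.coe_le_coe.mpr le_top)).exists_pos_forall_nearestPoints_range_eq
      hemb.isInducing (himm p)
  refine ⟨r, hr, fun x hx => ?_⟩
  obtain ⟨y, hy, hxy⟩ := hS.exists_infDist_eq_dist (range_nonempty f) x
  exact ⟨y, ⟨hy, hxy.symm⟩, fun z hz => hsub x hx hz ⟨hy, hxy.symm⟩⟩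

/-- A compact smooth submanifold of ℝ³ (realized as the image of a smooth embedding
of a compact smooth manifold which is an immersion) has strictly positive reach:
there is `r > 0` such that every point within distance `r` of `M` has a unique
nearest point on `M`. -/
theorem positive_reach_of_compact_smooth_submanifold
    {d : ℕ} {M : Type*} [TopologicalSpace M] [CompactSpace M] [Nonempty M]
    [ChartedSpace (EuclideanSpace ℝ (Fin d)) M]
    [IsManifold (modelWithCornersSelf ℝ (EuclideanSpace ℝ (Fin d))) (⊤ : ℕ∞) M]
    (f : M → EuclideanSpace ℝ (Fin 3))
    (hf : ContMDiff (modelWithCornersSelf ℝ (EuclideanSpace ℝ (Fin d)))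
      (modelWithCornersSelf ℝ (EuclideanSpace ℝ (Fin 3))) (⊤ : ℕ∞) f)
    (hemb : Topology.IsEmbedding f)
    (himm : ∀ m : M, Function.Injective
      (mfderiv (modelWithCornersSelf ℝ (EuclideanSpace ℝ (Fin d)))
        (modelWithCornersSelf ℝ (EuclideanSpace ℝ (Fin 3))) f m)) :
    ∃ r > (0 : ℝ), ∀ x : EuclideanSpace ℝ (Fin 3),
      infDist x (Set.range f) ≤ r →
        ∃! y, y ∈ Set.range f ∧ dist x y = infDist x (Set.range f) :=
  positive_reach_of_compact_smooth_submanifold_general f hf hemb himm
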